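/- arXiv:2006.14064 — 8 statements merged into one kernel-verified Lean document; each statement's English description precedes it below -/
import Mathlib

section
/- For every positive integer n, the n-th iterate of the operator x·d/dx applied to 1/(1-x) equals A_n(x)/(1-x)^{n+1} as formal power series, where A_n(x) is the n-th Eulerian polynomial. Equivalently, the sum over k ≥ 0 of k^n x^k equals A_n(x)/(1-x)^{n+1}. -/
/-! Inserting the largest letter into one of the `n + 1` slots of a permutation with `d` descents
creates no new descent when it goes right after one of the `d` descent positions (the last
position included) and exactly one new descent otherwise; hence
`A_{n+1} = (n + 1) x A_n + x (1 - x) A_n'`. The series `S_n = ∑ k^n x^k` satisfy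
`S_{n+1} = x S_n'`, and differentiating `S_n (1 - x)^{n+1}` shows that these products obey the
same recurrence, starting from `S_0 (1 - x) = 1 = A_0`. -/

/-- Number of descents of a permutation of `Fin n`, where `i` is a descent if
`π i > π (i+1)` or `i` is the last index. -/
def des (n : ℕ) (π : Equiv.Perm (Fin n)) : ℕ :=
  (Finset.univ.filter (fun i : Fin n =>
    (if h : (i : ℕ) + 1 < n then (((π ⟨(i : ℕ) + 1, h⟩ : Fin n) : ℕ) : ℤ) else (-1 : ℤ))
      < (((π i : Fin n) : ℕ) : ℤ))).card

/-- The Eulerian polynomial `A_n(x) = ∑_{π ∈ S_n} x^{des π}`. -/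
noncomputable def eulerianPoly (n : ℕ) : Polynomial ℚ :=
  ∑ π : Equiv.Perm (Fin n), Polynomial.X ^ des n π

open Finset Polynomial

-- The padding `-1` makes the last position of every permutation a descent, as in `des`.
def permWord (n : ℕ) (π : Equiv.Perm (Fin n)) (k : ℕ) : ℤ :=
  if h : k < n then (π ⟨k, h⟩ : ℕ) else -1

lemma permWord_lt (n : ℕ) (π : Equiv.Perm (Fin n)) (k : ℕ) : permWord n π k < n := by
  unfold permWord
  split
  · exact_mod_cast (π _).isLt
  · omega

def descentSet (n : ℕ) (π : Equiv.Perm (Fin n)) : Finset (Fin n) :=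
  univ.filter fun i => permWord n π (i + 1) < permWord n π i

lemma des_eq_card_descentSet (n : ℕ) (π : Equiv.Perm (Fin n)) :
    des n π = #(descentSet n π) := by
  refine congrArg card (filter_congr fun i _ => ?_)
  rw [permWord, permWord, dif_pos i.isLt, Fin.eta]

def insertMax (n : ℕ) (σ : Equiv.Perm (Fin n)) (i : Fin (n + 1)) : Equiv.Perm (Fin (n + 1)) :=
  ((finSuccEquiv' i).trans (Equiv.optionCongr σ)).trans (finSuccEquiv' (Fin.last n)).symm

section insertMax

variable {n : ℕ} (σ : Equiv.Perm (Fin n)) (i : Fin (n + 1))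

@[simp]
lemma insertMax_apply_self : insertMax n σ i i = Fin.last n := by
  simp [insertMax]

@[simp]
lemma insertMax_apply_succAbove (j : Fin n) :
    insertMax n σ i (i.succAbove j) = (σ j).castSucc := by
  simp [insertMax, Fin.succAbove_last]

lemma permWord_insertMax_of_lt {k : ℕ} (hk : k < i) :
    permWord (n + 1) (insertMax n σ i) k = permWord n σ k := by
  have hkn : k < n := by omega
  have : (⟨k, by omega⟩ : Fin (n + 1)) = i.succAbove ⟨k, hkn⟩ :=
    (Fin.succAbove_of_castSucc_lt i ⟨k, hkn⟩ hk).symm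
  rw [permWord, dif_pos (by omega), permWord, dif_pos hkn, this, insertMax_apply_succAbove]
  rfl

lemma permWord_insertMax_self : permWord (n + 1) (insertMax n σ i) i = n := by
  simp [permWord, i.is_le]

lemma permWord_insertMax_of_gt {k : ℕ} (hk : i < k) :
    permWord (n + 1) (insertMax n σ i) k = permWord n σ (k - 1) := by
  by_cases hkn : k < n + 1
  · have : (⟨k, hkn⟩ : Fin (n + 1)) = i.succAbove ⟨k - 1, by omega⟩ := by
      rw [Fin.succAbove_of_le_castSucc _ _ (by simp only [Fin.castSucc_mk, Fin.le_def]; omega)]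
      exact Fin.ext (by simp only [Fin.succ_mk]; omega)
    rw [permWord, dif_pos hkn, permWord, dif_pos (by omega), this, insertMax_apply_succAbove]
    rfl
  · rw [permWord, dif_neg hkn, permWord, dif_neg (by omega)]

lemma insertMax_symm_last :
    (insertMax n σ i).symm (Fin.last n) = i :=
  (Equiv.symm_apply_eq _).2 (insertMax_apply_self σ i).symm

lemma insertMax_bijective :
    Function.Bijective fun p : Equiv.Perm (Fin n) × Fin (n + 1) => insertMax n p.1 p.2 := by
  refine (Fintype.bijective_iff_injective_and_card _).2 ⟨?_, ?_⟩
  · rintro ⟨σ, i⟩ ⟨σ', i'⟩ h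
    obtain rfl : i = i' := by
      simpa only [insertMax_symm_last] using congrArg (fun τ => τ.symm (Fin.last n)) h
    have hσ : σ = σ' := Equiv.ext fun j => Fin.castSucc_injective n <| by
      simpa only [insertMax_apply_succAbove] using congrArg (fun τ => τ (i.succAbove j)) h
    rw [hσ]
  · simp [Fintype.card_perm, Nat.factorial_succ, mul_comm]

end insertMax

section descents

variable {n : ℕ} (σ : Equiv.Perm (Fin n))

lemma mem_descentSet {π : Equiv.Perm (Fin n)} {j : Fin n} :
    j ∈ descentSet n π ↔ permWord n π (j + 1) < permWord n π j := by
  simp [descentSet]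

lemma self_mem_descentSet_insertMax (i : Fin (n + 1)) :
    i ∈ descentSet (n + 1) (insertMax n σ i) := by
  rw [mem_descentSet, permWord_insertMax_self, permWord_insertMax_of_gt σ i (by omega),
    Nat.add_sub_cancel]
  exact permWord_lt n σ i

lemma succAbove_mem_descentSet_insertMax_iff (i : Fin (n + 1)) (j : Fin n) :
    i.succAbove j ∈ descentSet (n + 1) (insertMax n σ i) ↔
      j.succ ≠ i ∧ j ∈ descentSet n σ := by
  rw [mem_descentSet, mem_descentSet, Ne, Fin.ext_iff, Fin.val_succ]
  rcases lt_or_ge (j : ℕ) i with hji | hij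
  · rw [Fin.succAbove_of_castSucc_lt _ _ hji, Fin.val_castSucc,
      permWord_insertMax_of_lt σ i hji]
    by_cases hlast : (j : ℕ) + 1 = i
    · rw [hlast, permWord_insertMax_self]
      simpa using (permWord_lt n σ j).le
    · rw [permWord_insertMax_of_lt σ i (by omega)]
      simp [hlast]
  · rw [Fin.succAbove_of_le_castSucc _ _ hij, Fin.val_succ,
      permWord_insertMax_of_gt σ i (by omega), permWord_insertMax_of_gt σ i (by omega)]
    simp only [Nat.add_sub_cancel]
    omega

lemma descentSet_insertMax (i : Fin (n + 1)) :
    descentSet (n + 1) (insertMax n σ i) =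
      insert i (((descentSet n σ).filter fun j => j.succ ≠ i).map i.succAboveEmb) := by
  ext x
  rcases i.eq_self_or_eq_succAbove x with rfl | ⟨j, rfl⟩
  · simp [self_mem_descentSet_insertMax]
  · simp [succAbove_mem_descentSet_insertMax_iff, Fin.succAbove_ne, and_comm]

lemma des_insertMax (i : Fin (n + 1)) :
    des (n + 1) (insertMax n σ i) = #((descentSet n σ).filter fun j => j.succ ≠ i) + 1 := by
  rw [des_eq_card_descentSet, descentSet_insertMax,
    card_insert_of_notMem (by simp [Fin.succAbove_ne]), card_map]

lemma des_insertMax_zero : des (n + 1) (insertMax n σ 0) = des n σ + 1 := by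
  rw [des_insertMax, filter_true_of_mem fun j _ => j.succ_ne_zero, des_eq_card_descentSet]

lemma des_insertMax_succ (j : Fin n) :
    des (n + 1) (insertMax n σ j.succ) =
      if j ∈ descentSet n σ then des n σ else des n σ + 1 := by
  have : ((descentSet n σ).filter fun k => k.succ ≠ j.succ) = (descentSet n σ).erase j := by
    ext k
    simp [and_comm]
  rw [des_insertMax, this, des_eq_card_descentSet]
  split_ifs with hj
  · rw [card_erase_add_one hj]
  · rw [erase_eq_of_notMem hj]

end descents

lemma X_mul_derivative_X_pow {R : Type*} [CommSemiring R] (d : ℕ) :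
    X * derivative (X ^ d : R[X]) = (d : R[X]) * X ^ d := by
  rcases d with _ | d
  · simp
  · rw [derivative_X_pow, ← C_eq_natCast, Nat.add_sub_cancel]
    ring

lemma sum_X_pow_des_insertMax {R : Type*} [CommRing R] {n : ℕ} (σ : Equiv.Perm (Fin n)) :
    ∑ i, (X : R[X]) ^ des (n + 1) (insertMax n σ i) =
      X * (1 - X) * derivative (X ^ des n σ) + ((n : R[X]) + 1) * X * X ^ des n σ := by
  have hd : des n σ ≤ n := by
    simpa [des_eq_card_descentSet] using card_le_univ (descentSet n σ)
  rw [Fin.sum_univ_succ, des_insertMax_zero]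
  simp only [des_insertMax_succ, apply_ite (X ^ ·)]
  rw [Finset.sum_ite, sum_const, sum_const, filter_not, filter_univ_mem, card_univ_sdiff,
    Fintype.card_fin, ← des_eq_card_descentSet]
  push_cast [nsmul_eq_mul, Nat.cast_sub hd]
  linear_combination (X - 1) * X_mul_derivative_X_pow (R := R) (des n σ)

lemma eulerianPoly_zero : eulerianPoly 0 = 1 := by
  simp [eulerianPoly, des]

lemma eulerianPoly_succ (n : ℕ) :
    eulerianPoly (n + 1) =
      X * (1 - X) * derivative (eulerianPoly n) + ((n : ℚ[X]) + 1) * X * eulerianPoly n := by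
  rw [eulerianPoly, ← (insertMax_bijective (n := n)).sum_comp, Fintype.sum_prod_type]
  simp only [sum_X_pow_des_insertMax, eulerianPoly, derivative_sum, mul_sum, sum_add_distrib]

lemma mk_natCast_pow_succ {R : Type*} [CommSemiring R] (n : ℕ) :
    PowerSeries.mk (fun k => (k : R) ^ (n + 1)) =
      PowerSeries.X * PowerSeries.derivative R (PowerSeries.mk fun k => (k : R) ^ n) := by
  ext (_ | k)
  · simp
  · rw [PowerSeries.coeff_mk, PowerSeries.coeff_succ_X_mul, PowerSeries.coeff_derivative,
      PowerSeries.coeff_mk]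
    push_cast
    ring

lemma X_mul_derivative_mul_one_sub_X_pow {R : Type*} [CommRing R] (F : PowerSeries R) (m : ℕ) :
    PowerSeries.X * PowerSeries.derivative R F * (1 - PowerSeries.X) ^ (m + 1 + 1) =
      PowerSeries.X * (1 - PowerSeries.X) *
          PowerSeries.derivative R (F * (1 - PowerSeries.X) ^ (m + 1)) +
        ((m : PowerSeries R) + 1) * PowerSeries.X * (F * (1 - PowerSeries.X) ^ (m + 1)) := by
  rw [Derivation.leibniz, Derivation.leibniz_pow, map_sub, Derivation.map_one_eq_zero,
    PowerSeries.derivative_X, add_tsub_cancel_right]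
  simp only [smul_eq_mul, nsmul_eq_mul]
  push_cast
  ring

theorem summation_formula_eulerian_general (n : ℕ) :
    PowerSeries.mk (fun k => (k : ℚ) ^ n) * (1 - PowerSeries.X) ^ (n + 1)
      = (eulerianPoly n : PowerSeries ℚ) := by
  induction n with
  | zero =>
    simp only [pow_zero, zero_add, pow_one, eulerianPoly_zero, Polynomial.coe_one]
    exact PowerSeries.mk_one_mul_one_sub_eq_one ℚ
  | succ m ih =>
    rw [mk_natCast_pow_succ, X_mul_derivative_mul_one_sub_X_pow, ih, eulerianPoly_succ,
      ← map_natCast (Polynomial.coeToPowerSeries.ringHom (R := ℚ)) m]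
    simp only [Polynomial.coe_add, Polynomial.coe_mul, Polynomial.coe_sub, Polynomial.coe_one,
      Polynomial.coe_X, PowerSeries.derivative_coe, Polynomial.coeToPowerSeries.ringHom_apply]

/-- `∑_{k ≥ 0} k^n x^k = A_n(x)/(1-x)^{n+1}` as formal power series. -/
theorem summation_formula_eulerian (n : ℕ) (hn : 1 ≤ n) :
    PowerSeries.mk (fun k => (k : ℚ) ^ n) * (1 - PowerSeries.X) ^ (n + 1)
      = (eulerianPoly n : PowerSeries ℚ) :=
  summation_formula_eulerian_general n
end

section
/- Let k be a positive integer and let C_n(x;k+1) be the (k+1)-order Eulerian polynomials defined by C_0 = 1 and C_{n+1}(x;k+1) = ((k+1)n+1)x C_n(x;k+1) + x(1-x) C_n'(x;k+1). Then for all n ≥ 1, (x/(1-x)^k · d/dx)^n (1/(1-x)) = C_n(x;k+1)/(1-x)^{n+kn+1}. -/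
/-! Writing `xD_k` for the operator `g ↦ x/(1-x)^k · g'`, the quotient rule gives
`xD_k (p/(1-x)^m) = x (m p + (1-x) p') / (1-x)^(m+k+1)`. With `m = (k+1)n + 1` this is exactly the
recurrence of `C_n(x;k+1)`, and the exponent grows from `(k+1)n + 1` to `(k+1)(n+1) + 1`. -/

open Polynomial Set

variable {𝕜 : Type*} [NontriviallyNormedField 𝕜]

theorem Polynomial.hasDerivAt_eval_div_one_sub_pow (p : 𝕜[X]) (m : ℕ) {x : 𝕜} (hx : x ≠ 1) :
    HasDerivAt (fun z => p.eval z / (1 - z) ^ m)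
      ((p.derivative.eval x * (1 - x) + m * p.eval x) / (1 - x) ^ (m + 1)) x := by
  have h1x : (1 : 𝕜) - x ≠ 0 := sub_ne_zero.mpr hx.symm
  have hpow : HasDerivAt (fun z : 𝕜 => (1 - z) ^ m) (m * (1 - x) ^ (m - 1) * -1) x := by
    simpa using ((hasDerivAt_id x).const_sub 1).fun_pow m
  refine ((p.hasDerivAt x).fun_div hpow (pow_ne_zero m h1x)).congr_deriv ?_
  rcases m with _ | m
  · simp [h1x]
  · rw [Nat.add_sub_cancel]
    field_simp
    ring

theorem eqOn_xD_eval_div_one_sub_pow {g : 𝕜 → 𝕜} {p : 𝕜[X]} {m : ℕ} (k : ℕ)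
    (hg : EqOn g (fun z => p.eval z / (1 - z) ^ m) {1}ᶜ) :
    EqOn (fun y => y / (1 - y) ^ k * deriv g y)
      (fun z => (C (m : 𝕜) * (X * p) + X * (1 - X) * derivative p).eval z / (1 - z) ^ (m + k + 1))
      {1}ᶜ := by
  intro x hx
  have h1x : (1 : 𝕜) - x ≠ 0 := sub_ne_zero.mpr (Ne.symm hx)
  have hg_nhds : g =ᶠ[nhds x] fun z => p.eval z / (1 - z) ^ m :=
    Filter.eventually_of_mem (isOpen_compl_singleton.mem_nhds hx) hg
  simp only [hg_nhds.deriv_eq, (p.hasDerivAt_eval_div_one_sub_pow m hx).deriv, eval_add, eval_mul,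
    eval_C, eval_X, eval_sub, eval_one]
  field_simp
  ring

theorem xD_pow_k_order_eulerian_general (k : ℕ) (Cp : ℕ → Polynomial ℝ)
    (h0 : Cp 0 = 1)
    (hrec : ∀ n : ℕ, Cp (n + 1) =
        Polynomial.C (((k + 1) * n + 1 : ℕ) : ℝ) * (Polynomial.X * Cp n)
          + Polynomial.X * (1 - Polynomial.X) * Polynomial.derivative (Cp n))
    (n : ℕ) (x : ℝ) (hx : x ≠ 1) :
    ((fun g : ℝ → ℝ => fun y => (y / (1 - y) ^ k) * deriv g y)^[n] (fun y => 1 / (1 - y))) x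
      = (Cp n).eval x / (1 - x) ^ (n + k * n + 1) := by
  -- The derivative at `x` sees the previous iterate on a neighbourhood, so induct on `{1}ᶜ`.
  suffices EqOn ((fun g : ℝ → ℝ => fun y => (y / (1 - y) ^ k) * deriv g y)^[n]
      (fun y => 1 / (1 - y))) (fun z => (Cp n).eval z / (1 - z) ^ (n + k * n + 1)) {1}ᶜ from
    this hx
  induction n with
  | zero => intro z _; simp [h0]
  | succ n ih =>
    intro z hz
    rw [Function.iterate_succ_apply', hrec n, show (k + 1) * n + 1 = n + k * n + 1 by ring,
      show n + 1 + k * (n + 1) + 1 = n + k * n + 1 + k + 1 by ring]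
    exact eqOn_xD_eval_div_one_sub_pow k ih hz

/-- For the `(k+1)`-order Eulerian polynomials `C_n(x;k+1)` defined by the recurrence
`C_{n+1} = ((k+1)n+1) x C_n + x(1-x) C_n'` with `C_0 = 1`, one has
`(x/(1-x)^k d/dx)^n (1/(1-x)) = C_n(x;k+1)/(1-x)^{n+kn+1}`. -/
theorem xD_pow_k_order_eulerian (k : ℕ) (hk : 1 ≤ k) (Cp : ℕ → Polynomial ℝ)
    (h0 : Cp 0 = 1)
    (hrec : ∀ n : ℕ, Cp (n + 1) =
        Polynomial.C (((k + 1) * n + 1 : ℕ) : ℝ) * (Polynomial.X * Cp n)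
          + Polynomial.X * (1 - Polynomial.X) * Polynomial.derivative (Cp n))
    (n : ℕ) (hn : 1 ≤ n) (x : ℝ) (hx : x ≠ 1) :
    ((fun g : ℝ → ℝ => fun y => (y / (1 - y) ^ k) * deriv g y)^[n] (fun y => 1 / (1 - y))) x
      = (Cp n).eval x / (1 - x) ^ (n + k * n + 1) :=
  xD_pow_k_order_eulerian_general k Cp h0 hrec n x hx
end

section
/- Let k be a positive integer and let A_n^{(k)}(x) be the 1/k-Eulerian polynomials, defined by A_0^{(k)} = A_1^{(k)} = 1 and A_{n+1}^{(k)}(x) = (1+knx)A_n^{(k)}(x) + kx(1-x)(d/dx)A_n^{(k)}(x). Then for all n ≥ 1, (kx·d/dx)^n (1-x)^{-1/k} = x^n A_n^{(k)}(1/x) · (1-x)^{-n-1/k}. -/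
/-!
Write `f_{n,P}(x) = x^n P(1/x) (1-x)^{-n-1/k}` for a polynomial `P`. A direct computation gives
`k x f_{n,P}'(x) = f_{n+1,Q}(x)` with `Q = (1+knx)P + kx(1-x)P'`, the recurrence applied to `P`; for
`n = 0`, `P = 1` it is the case `n = 1` of the theorem. The rest is induction on `n`, since
`(k x d/dx) g` at `x` only depends on `g` near `x`.
-/
open Polynomial Filter Topology

theorem hasDerivAt_pow_mul_eval_one_div (P : ℝ[X]) (n : ℕ) {x : ℝ} (hx : x ≠ 0) :
    HasDerivAt (fun y => y ^ n * P.eval (1 / y))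
      (n * x ^ (n - 1) * P.eval (1 / x) - x ^ n * (derivative P).eval (1 / x) / x ^ 2) x := by
  have hinv : HasDerivAt (fun y : ℝ => 1 / y) (-(x ^ 2)⁻¹) x := by
    simpa [one_div] using hasDerivAt_inv hx
  exact ((hasDerivAt_pow n x).fun_mul ((P.hasDerivAt (1 / x)).comp x hinv)).congr_deriv
    (by simp only [Function.comp_apply]; ring)

theorem mul_deriv_pow_mul_eval_one_div_mul_one_sub_rpow (c : ℝ) (hc : c ≠ 0) (P : ℝ[X])
    (n : ℕ) {x : ℝ} (hx₀ : x ≠ 0) (hx₁ : x ≠ 1) :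
    c * x * deriv (fun y => y ^ n * P.eval (1 / y) * (1 - y) ^ (-(n : ℝ) - 1 / c)) x
      = x ^ (n + 1) * ((1 + C (c * n) * X) * P + C c * X * (1 - X) * derivative P).eval (1 / x)
          * (1 - x) ^ (-((n + 1 : ℕ) : ℝ) - 1 / c) := by
  set q : ℝ := -(n : ℝ) - 1 / c
  have h1x : 1 - x ≠ 0 := sub_ne_zero.2 hx₁.symm
  have hd : HasDerivAt (fun y => y ^ n * P.eval (1 / y) * (1 - y) ^ q) _ x :=
    (hasDerivAt_pow_mul_eval_one_div P n hx₀).fun_mul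
      (((hasDerivAt_id' x).const_sub 1).rpow_const (Or.inl h1x))
  have hexp : -((n + 1 : ℕ) : ℝ) - 1 / c = q - 1 := by push_cast; ring
  have hsplit : (1 - x) ^ q = (1 - x) ^ (q - 1) * (1 - x) := by
    rw [← Real.rpow_add_one h1x]; ring_nf
  have hpow : (n : ℝ) * x ^ (n - 1) * x = n * x ^ n := by
    rcases n with _ | n <;> simp [pow_succ, mul_assoc]
  rw [hd.deriv, hexp, hsplit]
  simp only [eval_add, eval_mul, eval_one, eval_C, eval_X, eval_sub]
  -- `c * (1 / c) = 1` is what lets the factor `(1 - x) ^ (q - 1)` absorb the derivative of `(1 - x) ^ q`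
  have hq : c * q = -c * n - 1 := by simp only [q]; field_simp
  field_simp
  linear_combination (c * x * (1 - x) ^ (q - 1) * (1 - x) * eval (1 / x) P * x) * hpow
    - (x ^ 3 * (1 - x) ^ (q - 1) * x ^ n * eval (1 / x) P) * hq

theorem kxD_pow_one_over_k_eulerian_general (k : ℕ) (hk : 1 ≤ k) (A : ℕ → Polynomial ℝ)
    (h1 : A 1 = 1)
    (hrec : ∀ n : ℕ, 1 ≤ n → A (n + 1) =
        (1 + Polynomial.C ((k * n : ℕ) : ℝ) * Polynomial.X) * A n
          + Polynomial.C (k : ℝ) * Polynomial.X * (1 - Polynomial.X)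
              * Polynomial.derivative (A n))
    (n : ℕ) (hn : 1 ≤ n) (x : ℝ) (hx : x ∈ Set.Ioo (0 : ℝ) 1) :
    ((fun g : ℝ → ℝ => fun y => (k : ℝ) * y * deriv g y)^[n]
        (fun y => (1 - y) ^ (-(1 / (k : ℝ))))) x
      = x ^ n * (A n).eval (1 / x) * (1 - x) ^ (-(n : ℝ) - 1 / (k : ℝ)) := by
  have hk₀ : (k : ℝ) ≠ 0 := Nat.cast_ne_zero.2 (by omega)
  induction n, hn using Nat.le_induction generalizing x with
  | base =>
    simpa [h1] using
      mul_deriv_pow_mul_eval_one_div_mul_one_sub_rpow k hk₀ 1 0 hx.1.ne' hx.2.ne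
  | succ n hn ih =>
    have hloc : _ =ᶠ[𝓝 x] fun y => y ^ n * (A n).eval (1 / y) * (1 - y) ^ (-(n : ℝ) - 1 / k) :=
      eventually_of_mem (Ioo_mem_nhds hx.1 hx.2) ih
    rw [Function.iterate_succ_apply', hloc.deriv_eq, hrec n hn, Nat.cast_mul]
    exact mul_deriv_pow_mul_eval_one_div_mul_one_sub_rpow k hk₀ (A n) n hx.1.ne' hx.2.ne

/-- For the `1/k`-Eulerian polynomials defined by `A_0 = A_1 = 1` and
`A_{n+1} = (1+knx)A_n + kx(1-x)A_n'`, one has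
`(kx d/dx)^n (1-x)^{-1/k} = x^n A_n(1/x) (1-x)^{-n-1/k}` on `(0,1)`. -/
theorem kxD_pow_one_over_k_eulerian (k : ℕ) (hk : 1 ≤ k) (A : ℕ → Polynomial ℝ)
    (h0 : A 0 = 1) (h1 : A 1 = 1)
    (hrec : ∀ n : ℕ, 1 ≤ n → A (n + 1) =
        (1 + Polynomial.C ((k * n : ℕ) : ℝ) * Polynomial.X) * A n
          + Polynomial.C (k : ℝ) * Polynomial.X * (1 - Polynomial.X)
              * Polynomial.derivative (A n))
    (n : ℕ) (hn : 1 ≤ n) (x : ℝ) (hx : x ∈ Set.Ioo (0 : ℝ) 1) :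
    ((fun g : ℝ → ℝ => fun y => (k : ℝ) * y * deriv g y)^[n]
        (fun y => (1 - y) ^ (-(1 / (k : ℝ))))) x
      = x ^ n * (A n).eval (1 / x) * (1 - x) ^ (-(n : ℝ) - 1 / (k : ℝ)) :=
  kxD_pow_one_over_k_eulerian_general k hk A h1 hrec n hn x hx
end

section
/- Define N_n(x) as the polynomials satisfying N_0 = 1 and N_n(x) = x^n A_n^{(2)}(1/x), where A_n^{(2)}(x) satisfies A_{n+1}^{(2)}(x) = (1+2nx)A_n^{(2)}(x) + 2x(1-x)(A_n^{(2)})'(x) with A_0^{(2)} = A_1^{(2)} = 1. Then (2x·d/dx)^n (1-x)^{-1/2} = N_n(x)/((1-x)^n √(1-x)) for all n ≥ 1. -/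
/-!
Writing `θ = 2x d/dx`, one has `θ (P(x) (1-x)^(-s)) = (2x(1-x) P' + 2s x P) (1-x)^(-(s+1))`, so
`θ^n (1-x)^(-1/2) = P_n(x) (1-x)^(-(n+1/2))` with `P_0 = 1` and
`P_{n+1} = 2x(1-x) P_n' + (2n+1) x P_n`. Substituting `1/x` for `x` and multiplying by `x^(n+1)`
turns the recurrence of the `A_n` into exactly this recurrence for `N_n(x) = x^n A_n(1/x)`.
-/

open Polynomial Set Filter

noncomputable def twoXDeriv (g : ℝ → ℝ) : ℝ → ℝ := fun y => 2 * y * deriv g y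

theorem hasDerivAt_eval_mul_one_sub_rpow_neg (p : ℝ[X]) (s : ℝ) {y : ℝ} (hy : y < 1) :
    HasDerivAt (fun z => p.eval z * (1 - z) ^ (-s))
      ((p.derivative.eval y * (1 - y) + s * p.eval y) * (1 - y) ^ (-(s + 1))) y := by
  have hpos : 0 < 1 - y := by linarith
  have hpow : HasDerivAt (fun z : ℝ => (1 - z) ^ (-s)) (-1 * -s * (1 - y) ^ (-s - 1)) y :=
    ((hasDerivAt_id y).const_sub 1).rpow_const (Or.inl hpos.ne')
  refine ((p.hasDerivAt y).mul hpow).congr_deriv ?_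
  have hsplit : (1 - y) ^ (-s) = (1 - y) * (1 - y) ^ (-(s + 1)) := by
    rw [show -s = 1 + -(s + 1) by ring, Real.rpow_add hpos, Real.rpow_one]
  rw [hsplit, show -s - 1 = -(s + 1) by ring]
  ring

theorem twoXDeriv_eval_mul_one_sub_rpow_neg (p : ℝ[X]) (s : ℝ) {y : ℝ} (hy : y < 1) :
    twoXDeriv (fun z => p.eval z * (1 - z) ^ (-s)) y
      = (C 2 * X * (1 - X) * derivative p + C (2 * s) * X * p).eval y * (1 - y) ^ (-(s + 1)) := by
  rw [twoXDeriv, (hasDerivAt_eval_mul_one_sub_rpow_neg p s hy).deriv]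
  simp only [eval_add, eval_mul, eval_C, eval_X, eval_sub, eval_one]
  ring

theorem eqOn_iterate_twoXDeriv_one_sub_rpow (P : ℕ → ℝ[X]) (h0 : P 0 = 1)
    (hsucc : ∀ m : ℕ,
      P (m + 1) = C 2 * X * (1 - X) * derivative (P m) + C (2 * m + 1 : ℝ) * X * P m)
    (m : ℕ) :
    EqOn (twoXDeriv^[m] fun y => (1 - y) ^ (-(1 / 2) : ℝ))
      (fun y => (P m).eval y * (1 - y) ^ (-(m + 1 / 2) : ℝ)) (Iio 1) := by
  induction m with
  | zero => intro y _; simp [h0]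
  | succ m ih =>
    rintro y (hy : y < 1)
    rw [Function.iterate_succ_apply', twoXDeriv,
      (ih.eventuallyEq_of_mem (Iio_mem_nhds hy)).deriv_eq, ← twoXDeriv,
      twoXDeriv_eval_mul_one_sub_rpow_neg _ _ hy, hsucc]
    push_cast
    ring_nf

theorem eval_derivative_of_eval_eq_pow_mul_eval_inv {p a : ℝ[X]} {m : ℕ}
    (h : ∀ x ≠ 0, p.eval x = x ^ m * a.eval x⁻¹) {x : ℝ} (hx : x ≠ 0) :
    p.derivative.eval x
      = m * x ^ (m - 1) * a.eval x⁻¹ + x ^ m * (a.derivative.eval x⁻¹ * -(x ^ 2)⁻¹) := by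
  have hq : HasDerivAt (fun z => z ^ m * a.eval z⁻¹)
      (m * x ^ (m - 1) * a.eval x⁻¹ + x ^ m * (a.derivative.eval x⁻¹ * -(x ^ 2)⁻¹)) x :=
    (hasDerivAt_pow m x).mul ((a.hasDerivAt x⁻¹).comp x (hasDerivAt_inv hx))
  refine (p.hasDerivAt x).unique (hq.congr_of_eventuallyEq ?_)
  filter_upwards [eventually_ne_nhds hx] with z hz using h z hz

theorem recurrence_of_eval_eq_pow_mul_eval_inv {a a' p p' : ℝ[X]} {m : ℕ}
    (ha' : a' = (1 + C ((2 * m : ℕ) : ℝ) * X) * a + C 2 * X * (1 - X) * derivative a)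
    (hp : ∀ x ≠ 0, p.eval x = x ^ m * a.eval x⁻¹)
    (hp' : ∀ x ≠ 0, p'.eval x = x ^ (m + 1) * a'.eval x⁻¹) :
    p' = C 2 * X * (1 - X) * derivative p + C (2 * m + 1 : ℝ) * X * p := by
  refine eq_of_infinite_eval_eq _ _ ((finite_singleton (0 : ℝ)).infinite_compl.mono ?_)
  intro x (hx : x ≠ 0)
  have hpow : (m : ℝ) * x ^ (m - 1) * x = m * x ^ m := by
    rcases Nat.eq_zero_or_pos m with rfl | hm
    · simp
    · rw [mul_assoc, mul_comm _ x, mul_pow_sub_one hm.ne']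
  simp only [mem_ofPred_eq, hp' x hx, ha', eval_add, eval_mul, eval_C, eval_X, eval_sub, eval_one,
    eval_derivative_of_eval_eq_pow_mul_eval_inv hp hx, hp x hx]
  set P := a.eval x⁻¹
  push_cast
  field_simp
  linear_combination (-2 * x ^ 2 * (1 - x) * P) * hpow

theorem Real.rpow_neg_nat_add_half {t : ℝ} (ht : 0 < t) (n : ℕ) :
    t ^ (-(n + 1 / 2) : ℝ) = (t ^ n * √t)⁻¹ := by
  rw [Real.rpow_neg ht.le, Real.rpow_add ht, Real.rpow_natCast, Real.sqrt_eq_rpow]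

theorem twoxD_pow_left_ascent_plateau_general (A : ℕ → Polynomial ℝ) (h0 : A 0 = 1) (h1 : A 1 = 1)
    (hrec : ∀ n : ℕ, 1 ≤ n → A (n + 1) =
        (1 + Polynomial.C ((2 * n : ℕ) : ℝ) * Polynomial.X) * A n
          + Polynomial.C (2 : ℝ) * Polynomial.X * (1 - Polynomial.X)
              * Polynomial.derivative (A n))
    (N : ℕ → Polynomial ℝ) (hN0 : N 0 = 1)
    (hN : ∀ n : ℕ, ∀ x : ℝ, x ≠ 0 → (N n).eval x = x ^ n * (A n).eval (1 / x))
    (n : ℕ) (x : ℝ) (hx : x ∈ Set.Ioo (0 : ℝ) 1) :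
    ((fun g : ℝ → ℝ => fun y => 2 * y * deriv g y)^[n]
        (fun y => (1 - y) ^ (-(1 / 2) : ℝ))) x
      = (N n).eval x / ((1 - x) ^ n * Real.sqrt (1 - x)) := by
  have hA : ∀ m : ℕ, A (m + 1) = (1 + C ((2 * m : ℕ) : ℝ) * X) * A m
      + C 2 * X * (1 - X) * derivative (A m) := by
    rintro (_ | m)
    · simp [h0, h1]
    · exact hrec (m + 1) m.succ_pos
  have hN' : ∀ m : ℕ, ∀ x ≠ 0, (N m).eval x = x ^ m * (A m).eval x⁻¹ := fun m x hx => by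
    rw [hN m x hx, one_div]
  have hNrec : ∀ m : ℕ, N (m + 1) = C 2 * X * (1 - X) * derivative (N m)
      + C (2 * m + 1 : ℝ) * X * N m := fun m =>
    recurrence_of_eval_eq_pow_mul_eval_inv (hA m) (hN' m) (hN' (m + 1))
  have h := eqOn_iterate_twoXDeriv_one_sub_rpow N hN0 hNrec n hx.2
  dsimp only at h
  rwa [Real.rpow_neg_nat_add_half (sub_pos.2 hx.2), ← div_eq_mul_inv] at h

/-- With `A_n = A_n^{(2)}` the `1/2`-Eulerian polynomials and `N_n(x) = x^n A_n(1/x)`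
(`N_0 = 1`), one has `(2x d/dx)^n (1-x)^{-1/2} = N_n(x)/((1-x)^n √(1-x))` on `(0,1)`. -/
theorem twoxD_pow_left_ascent_plateau (A : ℕ → Polynomial ℝ) (h0 : A 0 = 1) (h1 : A 1 = 1)
    (hrec : ∀ n : ℕ, 1 ≤ n → A (n + 1) =
        (1 + Polynomial.C ((2 * n : ℕ) : ℝ) * Polynomial.X) * A n
          + Polynomial.C (2 : ℝ) * Polynomial.X * (1 - Polynomial.X)
              * Polynomial.derivative (A n))
    (N : ℕ → Polynomial ℝ) (hN0 : N 0 = 1)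
    (hN : ∀ n : ℕ, ∀ x : ℝ, x ≠ 0 → (N n).eval x = x ^ n * (A n).eval (1 / x))
    (n : ℕ) (hn : 1 ≤ n) (x : ℝ) (hx : x ∈ Set.Ioo (0 : ℝ) 1) :
    ((fun g : ℝ → ℝ => fun y => 2 * y * deriv g y)^[n]
        (fun y => (1 - y) ^ (-(1 / 2) : ℝ))) x
      = (N n).eval x / ((1 - x) ^ n * Real.sqrt (1 - x)) :=
  twoxD_pow_left_ascent_plateau_general A h0 h1 hrec N hN0 hN n x hx
end

section
/- For an inversion sequence e = (e_1,…,e_n) with 0 ≤ e_i < i, let |e|_j = #{i : e_i = j} and define φ(e) = c · c_{|e|_1} c_{|e|_2} ⋯ c_{|e|_{n-1}} · f^{(|e|_0)}, where c_j denotes the j-th derivative of c (with c_0 = c). Then for all n ≥ 1, (c·D)^n f = Σ_{e ∈ I_n} φ(e), the sum being over all inversion sequences of length n. -/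
def cnt {n : ℕ} (e : (i : Fin n) → Fin ((i : ℕ) + 1)) (j : ℕ) : ℕ :=
  (Finset.univ.filter (fun i : Fin n => ((e i : ℕ) = j))).card

open Finset

lemma cnt_eq_sum {n : ℕ} (e : (i : Fin n) → Fin ((i : ℕ) + 1)) (j : ℕ) :
    cnt e j = ∑ i : Fin n, if (e i : ℕ) = j then 1 else 0 := by
  classical
  rw [cnt, Finset.card_filter]

lemma cnt_of_ge {n : ℕ} (e : (i : Fin n) → Fin ((i : ℕ) + 1)) {j : ℕ} (h : n ≤ j) :
    cnt e j = 0 := by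
  rw [cnt_eq_sum]
  refine Finset.sum_eq_zero fun i _ => ?_
  have h1 : (e i : ℕ) < (i : ℕ) + 1 := (e i).isLt
  have h2 : (i : ℕ) < n := i.isLt
  rw [if_neg]; omega

lemma cnt_snoc {n : ℕ} (e : (i : Fin n) → Fin ((i : ℕ) + 1)) (k : Fin (n + 1)) (j : ℕ) :
    cnt (Fin.snoc e k : (i : Fin (n + 1)) → Fin ((i : ℕ) + 1)) j
      = cnt e j + if (k : ℕ) = j then 1 else 0 := by
  rw [cnt_eq_sum, cnt_eq_sum, Fin.sum_univ_castSucc]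
  congr 1
  · exact Finset.sum_congr rfl fun i _ => by rw [Fin.snoc_castSucc]
  · rw [Fin.snoc_last]

/-- auxiliary per-sequence product -/
noncomputable def T (c f : ℝ → ℝ) (n : ℕ) (e : (i : Fin n) → Fin ((i : ℕ) + 1)) : ℝ → ℝ :=
  fun x => ∏ j ∈ Finset.range (n + 1), iteratedDeriv (cnt e j) (if j = 0 then f else c) x

lemma hasDerivAt_T (c f : ℝ → ℝ) (hc : ContDiff ℝ (⊤ : ℕ∞) c) (hf : ContDiff ℝ (⊤ : ℕ∞) f)
    (n : ℕ) (e : (i : Fin n) → Fin ((i : ℕ) + 1)) (x : ℝ) :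
    HasDerivAt (T c f n e)
      (∑ k ∈ Finset.range (n + 1),
        (∏ j ∈ (Finset.range (n + 1)).erase k,
            iteratedDeriv (cnt e j) (if j = 0 then f else c) x)
          * iteratedDeriv (cnt e k + 1) (if k = 0 then f else c) x) x := by
  have h := HasDerivAt.fun_finsetProd (u := Finset.range (n + 1))
    (f := fun j => iteratedDeriv (cnt e j) (if j = 0 then f else c))
    (f' := fun j => iteratedDeriv (cnt e j + 1) (if j = 0 then f else c) x)
    (x := x) ?_
  · simp only [smul_eq_mul] at h
    exact h
  · intro k _
    have hg : ContDiff ℝ (⊤ : ℕ∞) (if k = 0 then f else c) := by split <;> assumption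
    have hd : Differentiable ℝ (iteratedDeriv (cnt e k) (if k = 0 then f else c)) :=
      hg.differentiable_iteratedDeriv _ (by exact_mod_cast lt_top_iff_ne_top.2 (by simp))
    have := (hd x).hasDerivAt
    rwa [← iteratedDeriv_succ] at this

lemma key (c f : ℝ → ℝ) (hc : ContDiff ℝ (⊤ : ℕ∞) c) (hf : ContDiff ℝ (⊤ : ℕ∞) f) :
    ∀ (n : ℕ) (x : ℝ),
    (fun g : ℝ → ℝ => fun y => c y * deriv g y)^[n] f x
      = ∑ e : (i : Fin n) → Fin ((i : ℕ) + 1), T c f n e x := by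
  intro n
  induction n with
  | zero =>
    intro x
    simp [T, cnt]
  | succ n ih =>
    intro x
    rw [Function.iterate_succ_apply']
    have hIH : (fun g : ℝ → ℝ => fun y => c y * deriv g y)^[n] f
        = fun y => ∑ e : (i : Fin n) → Fin ((i : ℕ) + 1), T c f n e y := funext fun y => ih y
    rw [hIH]
    show c x * deriv (fun y => ∑ e : (i : Fin n) → Fin ((i : ℕ) + 1), T c f n e y) x = _
    rw [deriv_fun_sum (fun e _ => (hasDerivAt_T c f hc hf n e x).differentiableAt)]
    -- RHS: reindex by snoc
    have hre : (∑ e' : (i : Fin (n+1)) → Fin ((i : ℕ) + 1), T c f (n+1) e' x)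
        = ∑ p : Fin (n+1) × ((i : Fin n) → Fin ((i : ℕ) + 1)),
            T c f (n+1) (Fin.snocEquiv (fun i : Fin (n+1) => Fin ((i : ℕ) + 1)) p) x :=
      (Fintype.sum_equiv (Fin.snocEquiv (fun i : Fin (n+1) => Fin ((i : ℕ) + 1)))
        _ _ fun p => rfl).symm
    rw [hre, Fintype.sum_prod_type]
    rw [Finset.mul_sum]
    refine Eq.trans (Finset.sum_congr rfl fun e _ => ?_) Finset.sum_comm
    -- now: ∑ k : Fin (n+1), T c f (n+1) (snoc e k) x = c x * deriv (T c f n e) x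
    rw [(hasDerivAt_T c f hc hf n e x).deriv, Finset.mul_sum]
    rw [← Fin.sum_univ_eq_sum_range (fun k =>
      c x * ((∏ j ∈ (Finset.range (n + 1)).erase k,
            iteratedDeriv (cnt e j) (if j = 0 then f else c) x)
          * iteratedDeriv (cnt e k + 1) (if k = 0 then f else c) x))]
    refine Finset.sum_congr rfl fun k _ => Eq.symm ?_
    -- T (n+1) (snoc e k) x = c x * (∏ erase) * iteratedDeriv (cnt e k + 1) ...
    have hsnoc : ∀ j, cnt (Fin.snocEquiv (fun i : Fin (n+1) => Fin ((i : ℕ) + 1)) (k, e)) j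
        = cnt e j + if (k : ℕ) = j then 1 else 0 := fun j => cnt_snoc e k j
    show (∏ j ∈ Finset.range (n + 2),
        iteratedDeriv (cnt (Fin.snocEquiv (fun i : Fin (n+1) => Fin ((i : ℕ) + 1)) (k, e)) j)
          (if j = 0 then f else c) x) = _
    simp only [hsnoc]
    rw [Finset.prod_range_succ]
    have hk : (k : ℕ) < n + 1 := k.isLt
    rw [if_neg (by omega : ¬ (k : ℕ) = n + 1), cnt_of_ge e (by omega), if_neg (by omega : ¬ n + 1 = 0)]
    have hmem : (k : ℕ) ∈ Finset.range (n + 1) := Finset.mem_range.2 hk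
    rw [← Finset.prod_erase_mul _ _ hmem]
    have hprod : (∏ j ∈ (Finset.range (n + 1)).erase (k : ℕ),
        iteratedDeriv (cnt e j + if (k : ℕ) = j then 1 else 0) (if j = 0 then f else c) x)
        = ∏ j ∈ (Finset.range (n + 1)).erase (k : ℕ),
        iteratedDeriv (cnt e j) (if j = 0 then f else c) x := by
      refine Finset.prod_congr rfl fun j hj => ?_
      rw [if_neg (Finset.ne_of_mem_erase hj).symm, add_zero]
    rw [hprod, if_pos rfl, iteratedDeriv_zero]
    ring

/-- `(cD)^n f = ∑_{e ∈ I_n} φ(e)`, where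
`φ(e) = c · c_{|e|_1} ⋯ c_{|e|_{n-1}} · f^{(|e|_0)}`. -/
theorem cD_pow_eq_sum_inversion_sequences (n : ℕ) (hn : 1 ≤ n) (c f : ℝ → ℝ)
    (hc : ContDiff ℝ (⊤ : ℕ∞) c) (hf : ContDiff ℝ (⊤ : ℕ∞) f) (x : ℝ) :
    (fun g : ℝ → ℝ => fun y => c y * deriv g y)^[n] f x
      = ∑ e : (i : Fin n) → Fin ((i : ℕ) + 1),
          (c x * ∏ j ∈ Finset.Icc 1 (n - 1), iteratedDeriv (cnt e j) c x)
            * iteratedDeriv (cnt e 0) f x := by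
  rw [key c f hc hf n x]
  refine Finset.sum_congr rfl fun e _ => ?_
  show (∏ j ∈ Finset.range (n + 1), iteratedDeriv (cnt e j) (if j = 0 then f else c) x) = _
  rw [Finset.prod_range_succ, cnt_of_ge e le_rfl, if_neg (by omega : ¬ n = 0), iteratedDeriv_zero]
  have hr : Finset.range n = insert 0 (Finset.Icc 1 (n - 1)) := by
    ext m; simp only [Finset.mem_range, Finset.mem_insert, Finset.mem_Icc]; omega
  rw [hr, Finset.prod_insert (by simp), if_pos rfl]
  have : (∏ j ∈ Finset.Icc 1 (n - 1), iteratedDeriv (cnt e j) (if j = 0 then f else c) x)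
      = ∏ j ∈ Finset.Icc 1 (n - 1), iteratedDeriv (cnt e j) c x := by
    refine Finset.prod_congr rfl fun j hj => ?_
    rw [if_neg]; have := (Finset.mem_Icc.1 hj).1; omega
  rw [this]; ring
end

section
/- For each n ≥ 1 and each k ∈ [n], the Stirling number of the second kind S(n,k) equals the number of inversion sequences e ∈ I_n such that |e|_0 = k and |e|_j ∈ {0,1} for every 1 ≤ j ≤ n-1. -/
/-
Deleting the last entry gives the recurrence of `stirling2`. A sequence of length `n + 1` with
`k + 1` zeros and no repeated positive entry ends either in `0`, after such a sequence with `k`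
zeros, or in a positive value not used before, after such a sequence with `k + 1` zeros. In the
latter case the `n - (k + 1)` positive entries of the prefix are distinct values in `{1, …, n}`,
so exactly `k + 1` values are left for the last entry: `S(n+1, k+1) = (k+1) S(n, k+1) + S(n, k)`.
-/

open scoped Classical

/-- Stirling numbers of the second kind. -/
def stirling2 : ℕ → ℕ → ℕ
  | 0, 0 => 1
  | 0, _ + 1 => 0
  | _ + 1, 0 => 0
  | n + 1, k + 1 => (k + 1) * stirling2 n (k + 1) + stirling2 n k

open Finset

theorem card_eq_sum_card_filter_snoc {n : ℕ} {α : Fin (n + 1) → Type*} [∀ i, Fintype (α i)]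
    [∀ i, DecidableEq (α i)] (s : Finset (∀ i, α i)) :
    #s = ∑ f : ∀ i : Fin n, α i.castSucc, #{x | Fin.snoc f x ∈ s} := by
  conv_lhs => rw [← filter_univ_mem s]
  simp only [card_filter]
  rw [← (Fin.snocEquiv α).sum_comp, Fintype.sum_prod_type, sum_comm]
  rfl

abbrev InvSeq (n : ℕ) : Type := (i : Fin n) → Fin ((i : ℕ) + 1)

namespace InvSeq

variable {n : ℕ}

theorem cnt_snoc (e : InvSeq n) (x : Fin (n + 1)) (j : ℕ) :
    cnt (Fin.snoc e x : InvSeq (n + 1)) j = cnt e j + if (x : ℕ) = j then 1 else 0 := by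
  simp only [cnt, card_filter, Fin.sum_univ_castSucc, Fin.snoc_castSucc, Fin.snoc_last]

theorem cnt_eq_zero_of_le (e : InvSeq n) {j : ℕ} (hj : n ≤ j) : cnt e j = 0 := by
  rw [cnt, card_eq_zero, filter_eq_empty_iff]
  intro i _
  have := (e i).isLt
  omega

theorem cnt_zero_pos (e : InvSeq (n + 1)) : 0 < cnt e 0 :=
  card_pos.mpr ⟨0, by simpa using Fin.val_eq_zero (e 0)⟩

theorem sum_cnt (e : InvSeq n) : ∑ x : Fin (n + 1), cnt e x = n := by
  have hmaps : ((univ : Finset (Fin n)) : Set (Fin n)).MapsTo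
      (fun i => (⟨e i, by omega⟩ : Fin (n + 1))) (univ : Finset (Fin (n + 1))) := fun _ _ => by simp
  simpa [cnt, Fin.ext_iff] using (card_eq_sum_card_fiberwise hmaps).symm

def PosEntriesDistinct (e : InvSeq n) : Prop := ∀ j, j ≠ 0 → cnt e j ≤ 1

theorem card_unused_eq_cnt_zero {e : InvSeq n} (he : PosEntriesDistinct e) :
    #{i : Fin n | cnt e (i + 1) = 0} = cnt e 0 := by
  have hsum := sum_cnt e
  rw [Fin.sum_univ_succ] at hsum
  have hused : ∑ i : Fin n, cnt e (i.succ : ℕ) = #{i : Fin n | ¬cnt e (i + 1) = 0} := by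
    rw [card_filter]
    refine sum_congr rfl fun i _ => ?_
    have := he (i + 1) (by omega)
    simp only [Fin.val_succ]
    split_ifs <;> omega
  have hsplit := card_filter_add_card_filter_not (s := (univ : Finset (Fin n)))
    (p := fun i => cnt e (i + 1) = 0)
  simp only [card_univ, Fintype.card_fin] at hsplit
  simp only [Fin.val_zero] at hsum
  omega

theorem posEntriesDistinct_snoc_zero (e : InvSeq n) :
    PosEntriesDistinct (Fin.snoc e 0 : InvSeq (n + 1)) ↔ PosEntriesDistinct e := by
  refine forall₂_congr fun j hj => ?_
  rw [cnt_snoc, Fin.val_zero, if_neg (Ne.symm hj), add_zero]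

theorem posEntriesDistinct_snoc_succ (e : InvSeq n) (i : Fin n) :
    PosEntriesDistinct (Fin.snoc e i.succ : InvSeq (n + 1)) ↔
      PosEntriesDistinct e ∧ cnt e (i + 1) = 0 := by
  simp only [PosEntriesDistinct, cnt_snoc, Fin.val_succ]
  constructor
  · intro h
    refine ⟨fun j hj => (Nat.le_add_right _ _).trans (h j hj), ?_⟩
    simpa using h (i + 1) (by omega)
  · rintro ⟨h, hi⟩ j hj
    split_ifs with hij
    · subst hij; omega
    · simpa using h j hj

theorem posEntriesDistinct_iff (e : InvSeq n) :
    PosEntriesDistinct e ↔ ∀ j ∈ Icc 1 (n - 1), cnt e j ≤ 1 := by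
  refine ⟨fun h j hj => h j (by simp at hj; omega), fun h j hj => ?_⟩
  rcases lt_or_ge j n with hjn | hjn
  · exact h j (by simp; omega)
  · simp [cnt_eq_zero_of_le e hjn]

noncomputable def stirlingSeqs (n k : ℕ) : Finset (InvSeq n) :=
  {e | cnt e 0 = k ∧ PosEntriesDistinct e}

@[simp]
theorem mem_stirlingSeqs {k : ℕ} {e : InvSeq n} :
    e ∈ stirlingSeqs n k ↔ cnt e 0 = k ∧ PosEntriesDistinct e := by
  simp [stirlingSeqs]

theorem snoc_zero_mem_stirlingSeqs_succ (e : InvSeq n) (k : ℕ) :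
    (Fin.snoc e 0 : InvSeq (n + 1)) ∈ stirlingSeqs (n + 1) (k + 1) ↔ e ∈ stirlingSeqs n k := by
  simp [posEntriesDistinct_snoc_zero, cnt_snoc]

theorem snoc_succ_mem_stirlingSeqs (e : InvSeq n) (i : Fin n) (k : ℕ) :
    (Fin.snoc e i.succ : InvSeq (n + 1)) ∈ stirlingSeqs (n + 1) k ↔
      e ∈ stirlingSeqs n k ∧ cnt e (i + 1) = 0 := by
  simp [posEntriesDistinct_snoc_succ, cnt_snoc, and_assoc]

theorem card_snoc_mem_stirlingSeqs_succ (e : InvSeq n) (k : ℕ) :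
    #{x : Fin (n + 1) | (Fin.snoc e x : InvSeq (n + 1)) ∈ stirlingSeqs (n + 1) (k + 1)} =
      (if e ∈ stirlingSeqs n k then 1 else 0) +
        if e ∈ stirlingSeqs n (k + 1) then k + 1 else 0 := by
  rw [Fin.card_filter_univ_succ']
  simp only [snoc_zero_mem_stirlingSeqs_succ, snoc_succ_mem_stirlingSeqs]
  congr 1
  split_ifs with he
  · rw [mem_stirlingSeqs] at he
    simp only [mem_stirlingSeqs, he, true_and]
    rw [card_unused_eq_cnt_zero he.2, he.1]
  · simp [he]

theorem card_stirlingSeqs_succ_succ (n k : ℕ) :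
    #(stirlingSeqs (n + 1) (k + 1)) =
      (k + 1) * #(stirlingSeqs n (k + 1)) + #(stirlingSeqs n k) := by
  rw [card_eq_sum_card_filter_snoc]
  refine (Fintype.sum_congr _ _ fun e : InvSeq n => card_snoc_mem_stirlingSeqs_succ e k).trans ?_
  rw [sum_add_distrib, sum_ite_mem, sum_ite_mem]
  simp [mul_comm, add_comm]

theorem stirlingSeqs_zero (k : ℕ) : stirlingSeqs 0 k = if k = 0 then univ else ∅ := by
  ext e
  split_ifs with hk <;> simp [cnt_eq_zero_of_le, PosEntriesDistinct, eq_comm, hk, Unique.eq_default]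

theorem stirlingSeqs_succ_zero (n : ℕ) : stirlingSeqs (n + 1) 0 = ∅ :=
  filter_false_of_mem fun e _ he => (cnt_zero_pos e).ne' he.1

theorem stirling2_eq_card_stirlingSeqs (n k : ℕ) : stirling2 n k = #(stirlingSeqs n k) := by
  induction n generalizing k with
  | zero => cases k <;> simp [stirlingSeqs_zero, stirling2]
  | succ n ih =>
    cases k with
    | zero => simp [stirlingSeqs_succ_zero, stirling2]
    | succ k => rw [card_stirlingSeqs_succ_succ, ← ih, ← ih, stirling2]

end InvSeq

theorem stirling2_eq_card_inversion_sequences_general (n k : ℕ) :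
    stirling2 n k = (Finset.univ.filter (fun e : (i : Fin n) → Fin ((i : ℕ) + 1) =>
      cnt e 0 = k ∧ ∀ j ∈ Finset.Icc 1 (n - 1), cnt e j ≤ 1)).card := by
  rw [InvSeq.stirling2_eq_card_stirlingSeqs]
  congr 1
  ext e
  simp [InvSeq.posEntriesDistinct_iff]

/-- `S(n,k)` is the number of inversion sequences `e ∈ I_n` with `|e|_0 = k` and
`|e|_j ∈ {0,1}` for all `1 ≤ j ≤ n-1`. -/
theorem stirling2_eq_card_inversion_sequences (n k : ℕ) (hn : 1 ≤ n) (hk : 1 ≤ k)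
    (hkn : k ≤ n) :
    stirling2 n k = (Finset.univ.filter (fun e : (i : Fin n) → Fin ((i : ℕ) + 1) =>
      cnt e 0 = k ∧ ∀ j ∈ Finset.Icc 1 (n - 1), cnt e j ≤ 1)).card :=
  stirling2_eq_card_inversion_sequences_general n k
end

section
/- Fix n ≥ 1, an integer k with 1 ≤ k ≤ n, and a sequence (k_1,…,k_{n-1}) of nonnegative integers with k_1+⋯+k_{n-1} = n-k and k_1+⋯+k_j ≤ j for all 1 ≤ j ≤ n-1. Then the number of inversion sequences e ∈ I_n with |e|_0 = k and |e|_{n-i} = k_i for 1 ≤ i ≤ n-1 equals (2-k_1)(3-k_1-k_2)⋯(n-k_1-⋯-k_{n-1}) / (k! k_1! ⋯ k_{n-1}!), which also equals the product of binomial coefficients binom(1,k_1)·binom(2-k_1,k_2)·binom(3-k_1-k_2,k_3)⋯binom(n-k_1-⋯-k_{n-1},k). -/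
open scoped Classical

/-!
An inversion sequence `e ∈ I_n` is determined by its level sets `S_j = {i | e_i = n - 1 - j}`.
Since `e_i ≤ i`, `S_j` lies in the set `A_j` of the last `j + 1` positions, and `A_0 ⊆ A_1 ⊆ ⋯`;
conversely, pairwise disjoint sets `S_j ⊆ A_j` of sizes `c_j` with `∑ c_j = n` cover all positions
and are the level sets of a unique inversion sequence. Choosing `S_0, S_1, …` in turn, `S_j` is
any `c_j`-subset of the `j + 1 - c_0 - ⋯ - c_{j-1}` positions of `A_j` not used before, which gives
the product of binomials. The factorial form follows by telescoping `C(a, b) b! (a - b)! = a!`.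
-/

open Finset Function Nat

theorem Fin.pairwise_disjoint_cons_iff {β : Type*} [PartialOrder β] [OrderBot β] {m : ℕ} (T : β)
    (S : Fin m → β) :
    Pairwise (Disjoint on (Fin.cons T S : Fin (m + 1) → β)) ↔
      (∀ j, Disjoint T (S j)) ∧ Pairwise (Disjoint on S) := by
  refine ⟨fun h => ⟨fun j => h (Fin.succ_ne_zero j).symm,
    fun i j hij => h ((Fin.succ_injective m).ne hij)⟩, ?_⟩
  rintro ⟨hT, hS⟩ i j hij
  cases i using Fin.cases <;> cases j using Fin.cases
  · exact absurd rfl hij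
  · exact hT _
  · exact (hT _).symm
  · exact hS (fun h => hij (congrArg Fin.succ h))

section DisjointFamilies

variable {α : Type*} [DecidableEq α] [Fintype α]

noncomputable def disjointFamilies (A : ℕ → Finset α) (c : ℕ → ℕ) (m : ℕ) :
    Finset (Fin m → Finset α) :=
  univ.filter fun S => (∀ j, S j ⊆ A j ∧ #(S j) = c j) ∧ Pairwise (Disjoint on S)

theorem cons_mem_disjointFamilies_iff {A : ℕ → Finset α} {c : ℕ → ℕ} {m : ℕ}
    (T : Finset α) (S : Fin m → Finset α) :
    Fin.cons T S ∈ disjointFamilies A c (m + 1) ↔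
      T ∈ powersetCard (c 0) (A 0) ∧
        S ∈ disjointFamilies (fun j => A (j + 1) \ T) (fun j => c (j + 1)) m := by
  simp only [disjointFamilies, mem_filter, mem_univ, true_and, mem_powersetCard,
    Fin.forall_fin_succ, Fin.cons_zero, Fin.cons_succ, Fin.val_zero, Fin.val_succ, subset_sdiff,
    Fin.pairwise_disjoint_cons_iff, disjoint_comm (a := T), forall_and]
  tauto

theorem card_disjointFamilies_succ (A : ℕ → Finset α) (c : ℕ → ℕ) (m : ℕ) :
    #(disjointFamilies A c (m + 1)) = ∑ T ∈ powersetCard (c 0) (A 0),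
      #(disjointFamilies (fun j => A (j + 1) \ T) (fun j => c (j + 1)) m) := by
  rw [← card_sigma]
  refine (card_nbij' (fun S => ⟨S 0, Fin.tail S⟩) (fun p => Fin.cons p.1 p.2) ?_ ?_ ?_ ?_)
  · intro S hS
    rw [mem_coe, ← Fin.cons_self_tail S, cons_mem_disjointFamilies_iff] at hS
    simpa using hS
  · rintro ⟨T, S⟩ h
    simpa [cons_mem_disjointFamilies_iff] using h
  · exact fun S _ => by simp
  · exact fun p _ => by simp

theorem card_disjointFamilies {A : ℕ → Finset α} (hA : Monotone A) (c : ℕ → ℕ) (m : ℕ) :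
    #(disjointFamilies A c m) = ∏ j ∈ range m, (#(A j) - ∑ i ∈ range j, c i).choose (c j) := by
  induction m generalizing A c with
  | zero => simp [disjointFamilies]
  | succ m ih =>
    have hfiber : ∀ T ∈ powersetCard (c 0) (A 0),
        #(disjointFamilies (fun j => A (j + 1) \ T) (fun j => c (j + 1)) m) =
          ∏ j ∈ range m, (#(A (j + 1)) - ∑ i ∈ range (j + 1), c i).choose (c (j + 1)) := by
      intro T hT
      rw [mem_powersetCard] at hT
      rw [ih (fun i j hij => sdiff_subset_sdiff (hA (by omega)) le_rfl)]
      refine prod_congr rfl fun j _ => ?_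
      rw [card_sdiff_of_subset (hT.1.trans (hA (Nat.zero_le _))), hT.2, sum_range_succ',
        Nat.sub_sub, add_comm (c 0)]
    rw [card_disjointFamilies_succ, sum_congr rfl hfiber, sum_const, card_powersetCard,
      prod_range_succ', smul_eq_mul, mul_comm]
    simp

theorem exists_mem_of_sum_card_eq {ι : Type*} [Fintype ι] {S : ι → Finset α}
    (hS : Pairwise (Disjoint on S)) (hcard : ∑ i, #(S i) = Fintype.card α) (x : α) :
    ∃ i, x ∈ S i := by
  have hcover : univ.biUnion S = univ :=
    eq_univ_of_card _ (by rwa [card_biUnion fun i _ j _ hij => hS hij])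
  simpa using (hcover.symm ▸ mem_univ x : x ∈ univ.biUnion S)

end DisjointFamilies

section InversionSequences

variable {n : ℕ}

def levelSet (e : (i : Fin n) → Fin (i + 1)) (v : ℕ) : Finset (Fin n) :=
  univ.filter fun i => (e i : ℕ) = v

theorem card_levelSet (e : (i : Fin n) → Fin (i + 1)) (v : ℕ) : #(levelSet e v) = cnt e v := rfl

theorem mem_levelSet {e : (i : Fin n) → Fin (i + 1)} {v : ℕ} {i : Fin n} :
    i ∈ levelSet e v ↔ (e i : ℕ) = v := by
  simp [levelSet]

theorem disjoint_levelSet (e : (i : Fin n) → Fin (i + 1)) {v w : ℕ} (hvw : v ≠ w) :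
    Disjoint (levelSet e v) (levelSet e w) :=
  disjoint_left.2 fun _ hv hw => hvw ((mem_levelSet.1 hv).symm.trans (mem_levelSet.1 hw))

theorem levelSet_subset (e : (i : Fin n) → Fin (i + 1)) (v : ℕ) :
    levelSet e v ⊆ univ.filter fun i : Fin n => v ≤ (i : ℕ) := by
  intro i hi
  simpa [← mem_levelSet.1 hi] using Nat.lt_succ_iff.1 (e i).isLt

theorem card_filter_le_val {j : ℕ} (hj : j < n) :
    #(univ.filter fun i : Fin n => n - 1 - j ≤ (i : ℕ)) = j + 1 := by
  have : (univ.filter fun i : Fin n => n - 1 - j ≤ (i : ℕ)) = Ici ⟨n - 1 - j, by omega⟩ := by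
    ext i; simp [Fin.le_def]
  rw [this, Fin.card_Ici]
  dsimp only
  omega

theorem eq_of_levelSet_eq {e e' : (i : Fin n) → Fin (i + 1)}
    (h : ∀ v < n, levelSet e v = levelSet e' v) : e = e' := by
  funext i
  have hlt : (e i : ℕ) < n := by have := (e i).isLt; omega
  have hi : i ∈ levelSet e' (e i) := h _ hlt ▸ mem_levelSet.2 rfl
  exact Fin.ext (mem_levelSet.1 hi).symm

theorem exists_levelSet_eq {S : Fin n → Finset (Fin n)}
    (hsub : ∀ j : Fin n, S j ⊆ univ.filter fun i : Fin n => n - 1 - j ≤ (i : ℕ))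
    (hdisj : Pairwise (Disjoint on S)) (hcover : ∀ i, ∃ j, i ∈ S j) :
    ∃ e : (i : Fin n) → Fin (i + 1), ∀ j : Fin n, levelSet e (n - 1 - j) = S j := by
  choose g hg using hcover
  have hle : ∀ i, n - 1 - g i ≤ (i : ℕ) := fun i => by simpa using hsub (g i) (hg i)
  refine ⟨fun i => ⟨n - 1 - g i, Nat.lt_succ_of_le (hle i)⟩, fun j => ?_⟩
  ext i
  have hgj : g i = j ↔ i ∈ S j :=
    ⟨fun h => h ▸ hg i, fun hi => by_contra fun h => disjoint_left.1 (hdisj h) (hg i) hi⟩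
  rw [mem_levelSet, ← hgj, Fin.ext_iff]
  dsimp only
  omega

theorem card_filter_cnt_eq_prod_choose (c : ℕ → ℕ) (hc : ∑ j ∈ range n, c j = n) :
    #(univ.filter fun e : (i : Fin n) → Fin (i + 1) => ∀ j < n, cnt e (n - 1 - j) = c j) =
      ∏ j ∈ range n, (j + 1 - ∑ i ∈ range j, c i).choose (c j) := by
  set A : ℕ → Finset (Fin n) := fun j => univ.filter fun i : Fin n => n - 1 - j ≤ (i : ℕ)
  have hA : Monotone A := fun j j' hjj' i hi => by
    simp only [A, mem_filter, mem_univ, true_and] at hi ⊢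
    omega
  calc _ = #(disjointFamilies A c n) := ?_
    _ = _ := by
      rw [card_disjointFamilies hA]
      exact prod_congr rfl fun j hj => by rw [card_filter_le_val (mem_range.1 hj)]
  refine card_bij (fun e _ j => levelSet e (n - 1 - j)) ?_ ?_ ?_
  · intro e he
    simp only [mem_filter, mem_univ, true_and] at he
    simp only [disjointFamilies, mem_filter, mem_univ, true_and, card_levelSet]
    refine ⟨fun j => ⟨levelSet_subset e _, he j j.isLt⟩, fun i j hij => disjoint_levelSet e ?_⟩
    have := Fin.val_injective.ne hij
    omega
  · intro e _ e' _ h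
    refine eq_of_levelSet_eq fun v hv => ?_
    simpa [show n - 1 - (n - 1 - v) = v by omega] using congrFun h ⟨n - 1 - v, by omega⟩
  · intro S hS
    simp only [disjointFamilies, mem_filter, mem_univ, true_and] at hS
    obtain ⟨hSA, hdisj⟩ := hS
    have hcard : ∑ j, #(S j) = Fintype.card (Fin n) := by
      simp only [fun j => (hSA j).2, Fin.sum_univ_eq_sum_range c n, hc, Fintype.card_fin]
    obtain ⟨e, he⟩ := exists_levelSet_eq (fun j => (hSA j).1) hdisj
      (exists_mem_of_sum_card_eq hdisj hcard)
    refine ⟨e, ?_, funext he⟩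
    simp only [← card_levelSet]
    refine mem_filter.2 ⟨mem_univ _, fun j hj => ?_⟩
    rw [he ⟨j, hj⟩, (hSA _).2]

end InversionSequences

theorem prod_choose_mul_prod_factorial (c : ℕ → ℕ) (n : ℕ)
    (hc : ∀ j ≤ n, ∑ i ∈ range j, c i ≤ j) :
    (∏ j ∈ range n, (j + 1 - ∑ i ∈ range j, c i).choose (c j)) * (∏ j ∈ range n, (c j)!) *
        (n - ∑ i ∈ range n, c i)! = ∏ j ∈ range n, (j + 1 - ∑ i ∈ range j, c i) := by
  induction n with
  | zero => simp
  | succ n ih =>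
    set s := ∑ i ∈ range n, c i
    have hs : s ≤ n := hc n n.le_succ
    have hcn : c n ≤ n + 1 - s := by have := hc (n + 1) le_rfl; rw [sum_range_succ] at this; omega
    have hsplit := choose_mul_factorial_mul_factorial hcn
    rw [show n + 1 - s = (n - s) + 1 by omega, factorial_succ] at hsplit
    simp only [prod_range_succ, sum_range_succ, ← ih fun j hj => hc j (by omega)]
    rw [show n + 1 - (s + c n) = n - s + 1 - c n by omega, show n + 1 - s = n - s + 1 by omega]
    calc _ = (∏ j ∈ range n, (j + 1 - ∑ i ∈ range j, c i).choose (c j)) *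
          (∏ j ∈ range n, (c j)!) *
          ((n - s + 1).choose (c n) * (c n)! * (n - s + 1 - c n)!) := by ring
      _ = _ := by rw [hsplit]; ring

section TypeVector

variable {m k : ℕ} {ks : ℕ → ℕ}

/-- The type `(k_1, …, k_m, k)` of an inversion sequence of length `m + 1`, indexed from `0`:
entry `j` is the prescribed number of entries equal to `m - j`. -/
def typeVector (m k : ℕ) (ks : ℕ → ℕ) (j : ℕ) : ℕ :=
  if j < m then ks (j + 1) else k

theorem sum_range_typeVector {j : ℕ} (hj : j ≤ m) :
    ∑ i ∈ range j, typeVector m k ks i = ∑ i ∈ Icc 1 j, ks i := by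
  rw [range_eq_Ico, ← Ico_add_one_right_eq_Icc, ← sum_Ico_add' ks 0 j 1]
  exact sum_congr rfl fun i hi => if_pos (by simp at hi; omega)

theorem prod_range_typeVector {M : Type*} [CommMonoid M] (g : ℕ → ℕ → M) :
    ∏ j ∈ range (m + 1), g (j + 1) (typeVector m k ks j) =
      (∏ i ∈ Icc 1 m, g i (ks i)) * g (m + 1) k := by
  rw [prod_range_succ, typeVector, if_neg (lt_irrefl m), range_eq_Ico, ← Ico_add_one_right_eq_Icc,
    ← prod_Ico_add' (fun i => g i (ks i)) 0 m 1]
  exact congrArg (· * _) (prod_congr rfl fun i hi => by simp at hi; simp [typeVector, hi])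

theorem sum_range_typeVector_eq (hkm : k ≤ m + 1) (hsum : ∑ i ∈ Icc 1 m, ks i = m + 1 - k) :
    ∑ j ∈ range (m + 1), typeVector m k ks j = m + 1 := by
  rw [sum_range_succ, sum_range_typeVector le_rfl, hsum, typeVector, if_neg (lt_irrefl m)]
  omega

theorem sum_range_typeVector_le (hkm : k ≤ m + 1) (hsum : ∑ i ∈ Icc 1 m, ks i = m + 1 - k)
    (hpartial : ∀ j ∈ Icc 1 m, ∑ i ∈ Icc 1 j, ks i ≤ j) :
    ∀ j ≤ m + 1, ∑ i ∈ range j, typeVector m k ks i ≤ j := by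
  intro j hj
  rcases Nat.lt_or_eq_of_le hj with hj | rfl
  · rw [sum_range_typeVector (by omega)]
    rcases j.eq_zero_or_pos with rfl | hj0
    · simp
    · exact hpartial j (mem_Icc.2 ⟨hj0, by omega⟩)
  · exact (sum_range_typeVector_eq hkm hsum).le

theorem cnt_eq_typeVector_iff (e : (i : Fin (m + 1)) → Fin (i + 1)) :
    (∀ j < m + 1, cnt e (m - j) = typeVector m k ks j) ↔
      cnt e 0 = k ∧ ∀ i ∈ Icc 1 m, cnt e (m + 1 - i) = ks i := by
  constructor
  · intro h
    refine ⟨by simpa [typeVector] using h m m.lt_succ_self, fun i hi => ?_⟩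
    rw [mem_Icc] at hi
    have := h (i - 1) (by omega)
    rwa [typeVector, if_pos (by omega), show m - (i - 1) = m + 1 - i by omega,
      Nat.sub_add_cancel hi.1] at this
  · rintro ⟨h0, h⟩ j hj
    unfold typeVector
    split_ifs with hjm
    · simpa [show m + 1 - (j + 1) = m - j by omega] using h (j + 1) (mem_Icc.2 ⟨by omega, hjm⟩)
    · rwa [show m - j = 0 by omega]

theorem cast_prod_range_sub_typeVector (hpartial : ∀ j ∈ Icc 1 m, ∑ i ∈ Icc 1 j, ks i ≤ j) :
    ((∏ j ∈ range (m + 1), (j + 1 - ∑ i ∈ range j, typeVector m k ks i) : ℕ) : ℚ) =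
      ∏ j ∈ Icc 2 (m + 1), ((j : ℚ) - ∑ i ∈ Icc 1 (j - 1), (ks i : ℚ)) := by
  rw [prod_range_succ', ← Ico_add_one_right_eq_Icc, prod_Ico_eq_prod_range,
    show m + 1 + 1 - 2 = m by omega]
  simp only [sum_range_zero, Nat.sub_zero, zero_add, mul_one, Nat.cast_prod]
  refine prod_congr rfl fun j hj => ?_
  have hj := mem_range.1 hj
  rw [sum_range_typeVector (by omega), show 2 + j - 1 = j + 1 by omega,
    Nat.cast_sub ((hpartial (j + 1) (mem_Icc.2 ⟨by omega, by omega⟩)).trans (by omega))]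
  push_cast
  ring

end TypeVector

theorem card_inversion_sequences_of_type_general (n k : ℕ) (hn : 1 ≤ n) (hkn : k ≤ n)
    (ks : ℕ → ℕ)
    (hsum : ∑ i ∈ Finset.Icc 1 (n - 1), ks i = n - k)
    (hpartial : ∀ j ∈ Finset.Icc 1 (n - 1), ∑ i ∈ Finset.Icc 1 j, ks i ≤ j) :
    (Finset.univ.filter (fun e : (i : Fin n) → Fin ((i : ℕ) + 1) =>
        cnt e 0 = k ∧ ∀ i ∈ Finset.Icc 1 (n - 1), cnt e (n - i) = ks i)).card
      = (∏ j ∈ Finset.Icc 1 (n - 1),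
          Nat.choose (j - ∑ i ∈ Finset.Icc 1 (j - 1), ks i) (ks j))
        * Nat.choose (n - ∑ i ∈ Finset.Icc 1 (n - 1), ks i) k
    ∧ ((Finset.univ.filter (fun e : (i : Fin n) → Fin ((i : ℕ) + 1) =>
        cnt e 0 = k ∧ ∀ i ∈ Finset.Icc 1 (n - 1), cnt e (n - i) = ks i)).card : ℚ)
      = (∏ j ∈ Finset.Icc 2 n, ((j : ℚ) - ∑ i ∈ Finset.Icc 1 (j - 1), (ks i : ℚ)))
        / ((k.factorial : ℚ) * ∏ i ∈ Finset.Icc 1 (n - 1), ((ks i).factorial : ℚ)) := by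
  obtain ⟨m, rfl⟩ : ∃ m, n = m + 1 := ⟨n - 1, by omega⟩
  simp only [Nat.add_sub_cancel] at hsum hpartial ⊢
  have hc := sum_range_typeVector_eq hkn hsum
  have hcard := card_filter_cnt_eq_prod_choose _ hc
  simp only [Nat.add_sub_cancel] at hcard
  rw [filter_congr fun e _ => cnt_eq_typeVector_iff e] at hcard
  refine ⟨?_, ?_⟩
  · have hchoose := prod_range_typeVector (m := m) (k := k) (ks := ks)
      fun j x => (j - ∑ i ∈ Icc 1 (j - 1), ks i).choose x
    simp only [Nat.add_sub_cancel] at hchoose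
    rw [hcard, ← hchoose]
    refine prod_congr rfl fun j hj => ?_
    rw [sum_range_typeVector (Nat.lt_succ_iff.1 (mem_range.1 hj))]
  · have hfac := prod_choose_mul_prod_factorial _ _ (sum_range_typeVector_le hkn hsum hpartial)
    rw [hc, Nat.sub_self, factorial_zero, mul_one, prod_range_typeVector fun _ x => x !] at hfac
    rw [eq_div_iff (by positivity), ← cast_prod_range_sub_typeVector hpartial, ← hfac, hcard]
    push_cast
    ring

/-- The number of inversion sequences `e ∈ I_n` of a given type `(k, (k_1,…,k_{n-1}))`
(i.e. `|e|_0 = k` and `|e|_{n-i} = k_i`) equals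
`binom(1,k_1) binom(2-k_1,k_2) ⋯ binom(n-k_1-⋯-k_{n-1}, k)`, which also equals
`(2-k_1)(3-k_1-k_2)⋯(n-k_1-⋯-k_{n-1}) / (k! k_1! ⋯ k_{n-1}!)`. -/
theorem card_inversion_sequences_of_type (n k : ℕ) (hn : 1 ≤ n) (hk1 : 1 ≤ k) (hkn : k ≤ n)
    (ks : ℕ → ℕ)
    (hsum : ∑ i ∈ Finset.Icc 1 (n - 1), ks i = n - k)
    (hpartial : ∀ j ∈ Finset.Icc 1 (n - 1), ∑ i ∈ Finset.Icc 1 j, ks i ≤ j) :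
    (Finset.univ.filter (fun e : (i : Fin n) → Fin ((i : ℕ) + 1) =>
        cnt e 0 = k ∧ ∀ i ∈ Finset.Icc 1 (n - 1), cnt e (n - i) = ks i)).card
      = (∏ j ∈ Finset.Icc 1 (n - 1),
          Nat.choose (j - ∑ i ∈ Finset.Icc 1 (j - 1), ks i) (ks j))
        * Nat.choose (n - ∑ i ∈ Finset.Icc 1 (n - 1), ks i) k
    ∧ ((Finset.univ.filter (fun e : (i : Fin n) → Fin ((i : ℕ) + 1) =>
        cnt e 0 = k ∧ ∀ i ∈ Finset.Icc 1 (n - 1), cnt e (n - i) = ks i)).card : ℚ)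
      = (∏ j ∈ Finset.Icc 2 n, ((j : ℚ) - ∑ i ∈ Finset.Icc 1 (j - 1), (ks i : ℚ)))
        / ((k.factorial : ℚ) * ∏ i ∈ Finset.Icc 1 (n - 1), ((ks i).factorial : ℚ)) :=
  card_inversion_sequences_of_type_general n k hn hkn ks hsum hpartial
end

section
/- Let G₂ be the derivation on Q[x,y] with D_{G₂}(x) = y and D_{G₂}(y) = 1. Then for n ≥ 1, (x·D_{G₂})^n(x) = Σ_{i=1}^{⌊(n+2)/2⌋} S(n,i) x^i y^{n+2-2i}, where S(n,i) is the number of increasing 0-1-2 trees on {0,1,…,n} with i leaves; equivalently, the polynomial sequence P_n := (x·D_{G₂})^n(x) satisfies P_0 = x and P_{n+1} = x·D_{G₂}(P_n), with P_n|_{y=1} equal to the André polynomial S_n(x). -/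
/-! Give `x` weight 2 and `y` weight 1. Then `x·D` raises the weight by one, so `P_n = (x·D)^n x`
is weighted homogeneous of weight `n + 2`, i.e. a combination of the monomials `x^i y^(n+2-2i)`,
and is therefore determined by its specialisation `y = 1`. On polynomials of weight `m`,
applying `x·D` and then setting `y = 1` acts as `f ↦ m x f + x (1 - 2x) f'`, which for
`m = n + 2` is the André recursion; hence `P_n|_{y=1} = S_n`. The term `i = 0` is absent
since `x ∣ P_n`. -/

open MvPolynomial

theorem Finsupp.weight_two_one (d : Fin 2 →₀ ℕ) :
    Finsupp.weight ![2, 1] d = 2 * d 0 + d 1 := by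
  simp [Finsupp.weight_apply, Finsupp.sum_fintype, Fin.sum_univ_two, mul_comm]

namespace MvPolynomial

variable {R : Type*} [CommSemiring R]

theorem isWeightedHomogeneous_X_pow_mul_X_pow (a b : ℕ) :
    (X 0 ^ a * X 1 ^ b : MvPolynomial (Fin 2) R).IsWeightedHomogeneous ![2, 1] (2 * a + b) := by
  convert ((isWeightedHomogeneous_X R ![2, 1] 0).pow a).mul
    ((isWeightedHomogeneous_X R ![2, 1] 1).pow b) using 1
  simp [mul_comm]

noncomputable def dehomogenize : MvPolynomial (Fin 2) R →ₐ[R] Polynomial R :=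
  aeval fun j => if j = 0 then Polynomial.X else 1

@[simp]
theorem dehomogenize_X_zero : dehomogenize (X 0 : MvPolynomial (Fin 2) R) = Polynomial.X := by
  simp [dehomogenize]

@[simp]
theorem dehomogenize_X_one : dehomogenize (X 1 : MvPolynomial (Fin 2) R) = 1 := by
  simp [dehomogenize]

@[simp]
theorem dehomogenize_C (r : R) :
    dehomogenize (C r : MvPolynomial (Fin 2) R) = Polynomial.C r := by
  simp [dehomogenize, Polynomial.algebraMap_eq]

theorem IsWeightedHomogeneous.eq_sum_coeff_dehomogenize {p : MvPolynomial (Fin 2) R} {m : ℕ}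
    (hp : p.IsWeightedHomogeneous ![2, 1] m) :
    p = ∑ i ∈ Finset.range (m / 2 + 1),
      C ((dehomogenize p).coeff i) * X 0 ^ i * X 1 ^ (m - 2 * i) := by
  induction hp using IsWeightedHomogeneous.induction_on with
  | zero => simp
  | add p q _ _ hp hq =>
    conv_lhs => rw [hp, hq]
    simp only [map_add, Polynomial.coeff_add, add_mul, Finset.sum_add_distrib]
  | monomial e r he =>
    rw [Finsupp.weight_two_one] at he
    rw [monomial_fin_two]
    generalize e 0 = a, e 1 = b at he ⊢
    simp only [map_mul, map_pow, dehomogenize_C, dehomogenize_X_zero, dehomogenize_X_one,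
      one_pow, mul_one, Polynomial.coeff_C_mul_X_pow]
    rw [Finset.sum_eq_single a]
    · simp [← he]
    · intro i _ hi
      simp [hi]
    · intro ha
      simp at ha
      omega

theorem X_mul_derivation_C_mul_X_pow_mul_X_pow
    (d : Derivation R (MvPolynomial (Fin 2) R) (MvPolynomial (Fin 2) R))
    (hx : d (X 0) = X 1) (hy : d (X 1) = 1) (r : R) (a b : ℕ) :
    X 0 * d (C r * X 0 ^ a * X 1 ^ b) = C (r * a) * X 0 ^ a * X 1 ^ (b + 1)
      + C (r * b) * X 0 ^ (a + 1) * X 1 ^ (b - 1) := by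
  rw [mul_assoc, Derivation.leibniz, derivation_C, smul_zero, add_zero, Derivation.leibniz,
    Derivation.leibniz_pow, Derivation.leibniz_pow, hx, hy]
  rcases a with _ | a <;> rcases b with _ | b <;> simp <;> ring

theorem IsWeightedHomogeneous.X_mul_derivation
    (d : Derivation R (MvPolynomial (Fin 2) R) (MvPolynomial (Fin 2) R))
    (hx : d (X 0) = X 1) (hy : d (X 1) = 1)
    {p : MvPolynomial (Fin 2) R} {m : ℕ} (hp : p.IsWeightedHomogeneous ![2, 1] m) :
    (X 0 * d p).IsWeightedHomogeneous ![2, 1] (m + 1) := by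
  induction hp using IsWeightedHomogeneous.induction_on with
  | zero => simpa using isWeightedHomogeneous_zero R ![2, 1] (m + 1)
  | add p q _ _ hp hq => simpa [mul_add] using hp.add hq
  | monomial e r he =>
    rw [Finsupp.weight_two_one] at he
    rw [monomial_fin_two, X_mul_derivation_C_mul_X_pow_mul_X_pow d hx hy]
    generalize e 0 = a, e 1 = b at he ⊢
    rw [mul_assoc, mul_assoc]
    refine .add ?_ ?_
    · exact he ▸ (isWeightedHomogeneous_X_pow_mul_X_pow a (b + 1)).C_mul _
    · rcases b with _ | b
      · simpa using isWeightedHomogeneous_zero R ![2, 1] (m + 1)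
      · exact (by omega : 2 * (a + 1) + b = m + 1) ▸
          (isWeightedHomogeneous_X_pow_mul_X_pow (a + 1) b).C_mul _

theorem IsWeightedHomogeneous.dehomogenize_X_mul_derivation {R : Type*} [CommRing R]
    (d : Derivation R (MvPolynomial (Fin 2) R) (MvPolynomial (Fin 2) R))
    (hx : d (X 0) = X 1) (hy : d (X 1) = 1) {p : MvPolynomial (Fin 2) R} {m : ℕ}
    (hp : p.IsWeightedHomogeneous ![2, 1] m) :
    dehomogenize (X 0 * d p) = Polynomial.C (m : R) * (Polynomial.X * dehomogenize p)
      + Polynomial.X * (1 - 2 * Polynomial.X) * Polynomial.derivative (dehomogenize p) := by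
  induction hp using IsWeightedHomogeneous.induction_on with
  | zero => simp
  | add p q _ _ hp hq =>
    simp only [map_add, mul_add, hp, hq]
    ring
  | monomial e r he =>
    rw [Finsupp.weight_two_one] at he
    rw [monomial_fin_two, X_mul_derivation_C_mul_X_pow_mul_X_pow d hx hy]
    generalize e 0 = a, e 1 = b at he ⊢
    simp only [← he, map_add, map_mul, map_pow, dehomogenize_C, dehomogenize_X_zero,
      dehomogenize_X_one, one_pow, mul_one, Polynomial.derivative_C_mul_X_pow]
    rcases a with _ | a <;> simp [map_ofNat] <;> ring

end MvPolynomial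

/-- For the derivation with `D_{G₂}(x) = y`, `D_{G₂}(y) = 1` on `ℚ[x,y]`,
`(x·D_{G₂})^n(x) = ∑_{i=1}^{⌊(n+2)/2⌋} S(n,i) x^i y^{n+2-2i}`, where `S(n,i)` is the
`i`-th coefficient of the André polynomial `S_n` (the number of increasing 0-1-2 trees
on `{0,…,n}` with `i` leaves); in particular the substitution `y = 1` yields the
André polynomial `S_n(x)`. -/
theorem grammar_andre (d : Derivation ℚ (MvPolynomial (Fin 2) ℚ) (MvPolynomial (Fin 2) ℚ))
    (hx : d (MvPolynomial.X 0) = MvPolynomial.X 1)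
    (hy : d (MvPolynomial.X 1) = 1)
    (S : ℕ → Polynomial ℚ) (hS1 : S 1 = Polynomial.X)
    (hSrec : ∀ m : ℕ, 1 ≤ m → S (m + 1) =
        Polynomial.C ((m + 2 : ℕ) : ℚ) * (Polynomial.X * S m)
          + Polynomial.X * (1 - 2 * Polynomial.X) * Polynomial.derivative (S m))
    (n : ℕ) (hn : 1 ≤ n) :
    (fun p => MvPolynomial.X 0 * d p)^[n] (MvPolynomial.X 0)
      = ∑ i ∈ Finset.Icc 1 ((n + 2) / 2), MvPolynomial.C ((S n).coeff i)
          * MvPolynomial.X 0 ^ i * MvPolynomial.X 1 ^ (n + 2 - 2 * i)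
    ∧ MvPolynomial.aeval (fun j : Fin 2 => if j = 0 then (Polynomial.X : Polynomial ℚ) else 1)
        ((fun p => MvPolynomial.X 0 * d p)^[n] (MvPolynomial.X 0)) = S n := by
  have homogeneous (k : ℕ) :
      ((fun p => X 0 * d p)^[k] (X 0)).IsWeightedHomogeneous ![2, 1] (k + 2) := by
    induction k with
    | zero => simpa using isWeightedHomogeneous_X ℚ ![2, 1] 0
    | succ k ih =>
      rw [Function.iterate_succ_apply']
      exact ih.X_mul_derivation d hx hy
  have dehomogenize_eq (k : ℕ) (hk : 1 ≤ k) :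
      dehomogenize ((fun p => X 0 * d p)^[k] (X 0)) = S k := by
    induction k, hk using Nat.le_induction with
    | base => simp [hx, hS1]
    | succ k hk ih =>
      rw [Function.iterate_succ_apply', (homogeneous k).dehomogenize_X_mul_derivation d hx hy,
        ih, hSrec k hk]
  have coeff_zero : (S n).coeff 0 = 0 := by
    obtain ⟨k, rfl⟩ : ∃ k, n = k + 1 := ⟨n - 1, by omega⟩
    rw [← dehomogenize_eq _ hn, Function.iterate_succ_apply', map_mul, dehomogenize_X_zero,
      Polynomial.coeff_X_mul_zero]
  refine ⟨?_, dehomogenize_eq n hn⟩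
  rw [(homogeneous n).eq_sum_coeff_dehomogenize, dehomogenize_eq n hn, Finset.range_eq_Ico,
    Finset.sum_eq_sum_Ico_succ_bot (by omega), coeff_zero, map_zero, zero_mul, zero_mul, zero_add,
    Finset.Ico_add_one_right_eq_Icc]
end
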